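/- For every integer c ≥ 1 and all constants ε, ε' with 0 < ε' < ε < 1, there exist constants α > 0, γ₀ ≥ 1 and s₀ (depending only on c, ε and ε') such that the following holds. Let Σ be a finite alphabet with |Σ| ≥ s₀, and let m be a power of two with 2 ≤ m ≤ |Σ|^{1−ε}. Let h : Σ^c → [m] be a random simple tabulation hash function. Suppose C : (0,∞) → (0,∞) is a function such that for all γ with 0 < γ ≤ |Σ|^{ε'/c}, all sets S ⊆ Σ^c, all weights w_x ∈ [0,1] for x ∈ S, every y ∈ [m], and every t > 0, the random variable X = Σ_{x∈S} w_x·1[h(x) = y], with μ = E[X] and σ² = Var[X] > 0, satisfies Pr[|X − μ| ≥ t] ≤ 2·exp(−σ²·𝒞(t/σ²)/C(γ)) + m^{−γ}. Then for every γ with γ₀ ≤ γ ≤ |Σ|^{ε'/c}, one has C(γ) ≥ α·γ^{c−2}. -/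

import Mathlib

/-!
Take `B ⊆ Σ` with `|B| ≈ γ / (2c)` and let `X` count the keys of `B^c` hashing to `0`.
Distinct keys hash independently in pairs, so `μ = N/m` and `σ² = (N/m)(1 - 1/m)` with
`N = |B|^c`. With probability `m^{-c|B|}` the table vanishes on `[c] × B`; then `X = N`,
a deviation `t = N(1 - 1/m)` with `t/σ² = m`. As `γ > c|B|`, the error term `m^{-γ}` is at
most half this probability, so the assumed bound forces `σ² 𝒞(m) / C(γ) ≤ (c|B| + 2) log m`,
whereas `σ² 𝒞(m) ≳ N log m`. Hence `C(γ) ≳ |B|^{c-1} ≳ γ^{c-1} ≥ γ^{c-2}`.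
-/

open Finset Real
open scoped BigOperators Classical

noncomputable section

def bennett (x : ℝ) : ℝ := (x + 1) * Real.log (x + 1) - x

def unifExp {Ω : Type*} [Fintype Ω] (f : Ω → ℝ) : ℝ := (∑ ω, f ω) / (Fintype.card Ω : ℝ)

def unifVar {Ω : Type*} [Fintype Ω] (f : Ω → ℝ) : ℝ := unifExp (fun ω => (f ω - unifExp f) ^ 2)

def unifPr {Ω : Type*} [Fintype Ω] (p : Ω → Prop) : ℝ :=
  ((Finset.univ.filter (fun ω => p ω)).card : ℝ) / (Fintype.card Ω : ℝ)

/-- `k`-bit strings, with bitwise XOR given by addition in `(ZMod 2)^k`. -/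
abbrev Word (k : ℕ) : Type := Fin k → ZMod 2

def simpleTab {Sig : Type*} {c k : ℕ} (T : Fin c × Sig → Word k) (x : Fin c → Sig) : Word k :=
  ∑ i : Fin c, T (i, x i)

section Uniform

variable {Ω : Type*} [Fintype Ω]

lemma unifExp_sum {ι : Type*} (s : Finset ι) (f : ι → Ω → ℝ) :
    unifExp (fun ω => ∑ i ∈ s, f i ω) = ∑ i ∈ s, unifExp (f i) := by
  simp only [unifExp, Finset.sum_comm (s := s), Finset.sum_div]

lemma unifExp_ite_one_zero (p : Ω → Prop) [DecidablePred p] :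
    unifExp (fun ω => if p ω then (1 : ℝ) else 0) = unifPr p := by
  rw [unifExp, unifPr, Finset.sum_boole]
  congr

lemma unifVar_eq_unifExp_sq_sub [Nonempty Ω] (f : Ω → ℝ) :
    unifVar f = unifExp (fun ω => f ω ^ 2) - unifExp f ^ 2 := by
  have hN : (Fintype.card Ω : ℝ) ≠ 0 := by positivity
  set μ := unifExp f with hμ
  have hsum : ∑ ω, f ω = Fintype.card Ω * μ := by
    rw [hμ, unifExp]; field_simp
  have hexpand : ∑ ω, (f ω - μ) ^ 2 = ∑ ω, f ω ^ 2 - Fintype.card Ω * μ ^ 2 := by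
    simp only [sub_sq, Finset.sum_add_distrib, Finset.sum_sub_distrib, ← Finset.sum_mul,
      ← Finset.mul_sum, hsum, Finset.sum_const, Finset.card_univ, nsmul_eq_mul]
    ring
  rw [unifVar, unifExp, hexpand, unifExp]
  field_simp

lemma unifPr_mono {p q : Ω → Prop} (h : ∀ ω, p ω → q ω) : unifPr p ≤ unifPr q := by
  unfold unifPr
  gcongr with ω
  exact h ω

lemma AddMonoidHom.card_fiber_mul_card_eq {A G : Type*} [AddGroup A] [Fintype A]
    [AddMonoid G] [Fintype G] [DecidableEq G] (f : A →+ G) (hf : Function.Surjective f)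
    (y : G) : #{a | f a = y} * Fintype.card G = Fintype.card A := by
  have hfib : ∀ z, #{a | f a = z} = #{a | f a = y} := fun z =>
    AddMonoidHom.card_fiber_eq_of_mem_range f (hf z) (hf y)
  rw [← Finset.card_univ (α := A), Finset.card_eq_sum_card_fiberwise (s := univ) (t := univ)
    (fun a _ => mem_univ (f a))]
  simp [hfib, mul_comm]

lemma unifPr_map_eq {A G : Type*} [AddGroup A] [Fintype A] [AddMonoid G] [Fintype G]
    (f : A →+ G) (hf : Function.Surjective f) (y : G) :
    unifPr (fun a => f a = y) = (Fintype.card G : ℝ)⁻¹ := by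
  have h := congrArg (Nat.cast (R := ℝ)) (f.card_fiber_mul_card_eq hf y)
  push_cast at h
  have hfib : (#{a | f a = y} : ℝ) ≠ 0 := by
    intro h0
    rw [h0, zero_mul] at h
    exact (Fintype.card_pos (α := A)).ne' (by exact_mod_cast h.symm)
  rw [unifPr, ← h, div_mul_cancel_left₀ hfib]

lemma unifPr_forall_mem_eq_zero {ι G : Type*} [Fintype ι] [DecidableEq ι] [AddGroup G]
    [Fintype G] (P : Finset ι) :
    unifPr (fun T : ι → G => ∀ i ∈ P, T i = 0) = ((Fintype.card G : ℝ) ^ #P)⁻¹ := by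
  let restrict : (ι → G) →+ (P → G) :=
    { toFun := fun T i => T i, map_zero' := rfl, map_add' := fun _ _ => rfl }
  have hrestrict : Function.Surjective restrict := fun v =>
    ⟨fun i => if h : i ∈ P then v ⟨i, h⟩ else 0, funext fun i => by simp [restrict]⟩
  have h := unifPr_map_eq restrict hrestrict 0
  simp only [Fintype.card_fun, Fintype.card_coe, Nat.cast_pow] at h
  rw [← h]
  congr! 2 with T
  simp [restrict, funext_iff]

end Uniform

section Tabulation

variable {Sig : Type*} {c k : ℕ}

lemma card_word : Fintype.card (Word k) = 2 ^ k := by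
  simp [Word]

def simpleTabHom (x : Fin c → Sig) : (Fin c × Sig → Word k) →+ Word k where
  toFun T := simpleTab T x
  map_zero' := by simp [simpleTab]
  map_add' T U := by simp [simpleTab, Finset.sum_add_distrib]

@[simp]
lemma simpleTabHom_apply (x : Fin c → Sig) (T : Fin c × Sig → Word k) :
    simpleTabHom x T = simpleTab T x :=
  rfl

variable [DecidableEq Sig]

lemma simpleTab_single (x : Fin c → Sig) (i : Fin c) (a : Sig) (v : Word k) :
    simpleTab (Pi.single (i, a) v) x = if x i = a then v else 0 := by
  rw [simpleTab, Finset.sum_eq_single i]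
  · simp [Pi.single_apply, Prod.ext_iff]
  · intro j _ hj
    simp [Prod.ext_iff, hj]
  · simp

variable [Fintype Sig]

lemma unifPr_simpleTab_eq (hc : 0 < c) (x : Fin c → Sig) (y : Word k) :
    unifPr (fun T => simpleTab T x = y) = ((2 : ℝ) ^ k)⁻¹ := by
  have hsurj : Function.Surjective (simpleTabHom (k := k) x) := fun v =>
    ⟨Pi.single (⟨0, hc⟩, x ⟨0, hc⟩) v, by simp [simpleTab_single]⟩
  simpa [card_word] using unifPr_map_eq _ hsurj y

lemma unifPr_simpleTab_eq_and_eq {x x' : Fin c → Sig} (hxx' : x ≠ x') (y y' : Word k) :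
    unifPr (fun T => simpleTab T x = y ∧ simpleTab T x' = y') = ((2 : ℝ) ^ k)⁻¹ ^ 2 := by
  obtain ⟨i, hi⟩ := Function.ne_iff.mp hxx'
  let pair : (Fin c × Sig → Word k) →+ Word k × Word k :=
    (simpleTabHom x).prod (simpleTabHom x')
  have hsurj : Function.Surjective pair := fun ⟨v, v'⟩ =>
    ⟨Pi.single (i, x i) v + Pi.single (i, x' i) v', by
      simp only [pair, AddMonoidHom.prod_apply, map_add, simpleTabHom_apply, simpleTab_single]
      simp [hi, Ne.symm hi]⟩
  have h := unifPr_map_eq pair hsurj (y, y')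
  simp only [Fintype.card_prod, card_word, Nat.cast_mul, Nat.cast_pow, Nat.cast_ofNat] at h
  rw [inv_pow, sq, ← h]
  simp [pair]

end Tabulation

section BinCount

variable {Sig : Type*} {c k : ℕ}

def binCount (S : Finset (Fin c → Sig)) (y : Word k) (T : Fin c × Sig → Word k) : ℝ :=
  ∑ x ∈ S, if simpleTab T x = y then 1 else 0

lemma binCount_piFinset_zero (B : Finset Sig) {T : Fin c × Sig → Word k}
    (hT : ∀ p ∈ (univ : Finset (Fin c)) ×ˢ B, T p = 0) :
    binCount (Fintype.piFinset fun _ => B) 0 T = #B ^ c := by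
  have hzero : ∀ x ∈ Fintype.piFinset (fun _ : Fin c => B), simpleTab T x = 0 := fun x hx =>
    Finset.sum_eq_zero fun i _ => hT _ (by simpa using Fintype.mem_piFinset.mp hx i)
  simp [binCount, Finset.sum_ite_of_true hzero]

variable [Fintype Sig] [DecidableEq Sig]

lemma unifExp_binCount (hc : 0 < c) (S : Finset (Fin c → Sig)) (y : Word k) :
    unifExp (binCount S y) = #S * ((2 : ℝ) ^ k)⁻¹ := by
  unfold binCount
  simp only [unifExp_sum, unifExp_ite_one_zero, unifPr_simpleTab_eq hc, Finset.sum_const,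
    nsmul_eq_mul]

lemma unifExp_binCount_sq (hc : 0 < c) (S : Finset (Fin c → Sig)) (y : Word k) :
    unifExp (fun T => binCount S y T ^ 2)
      = #S * ((2 : ℝ) ^ k)⁻¹ + #S * (#S - 1) * ((2 : ℝ) ^ k)⁻¹ ^ 2 := by
  have hsq : ∀ T, binCount S y T ^ 2
      = ∑ x ∈ S, ∑ x' ∈ S, if simpleTab T x = y ∧ simpleTab T x' = y then 1 else 0 := by
    intro T
    simp only [binCount, sq, Finset.sum_mul_sum, ite_zero_mul_ite_zero, mul_one]
  have hrow : ∀ x ∈ S, ∑ x' ∈ S, unifPr (fun T => simpleTab T x = y ∧ simpleTab T x' = y)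
      = ((2 : ℝ) ^ k)⁻¹ + (#S - 1) * ((2 : ℝ) ^ k)⁻¹ ^ 2 := by
    intro x hx
    rw [← Finset.add_sum_erase S _ hx, Finset.sum_congr rfl fun x' hx' =>
      unifPr_simpleTab_eq_and_eq (Finset.ne_of_mem_erase hx').symm y y]
    simp [unifPr_simpleTab_eq hc, Finset.card_erase_of_mem hx, Nat.cast_sub
      (Finset.one_le_card.mpr ⟨x, hx⟩)]
  simp only [hsq, unifExp_sum, unifExp_ite_one_zero]
  rw [Finset.sum_congr rfl hrow, Finset.sum_const, nsmul_eq_mul]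
  ring

lemma unifVar_binCount (hc : 0 < c) (S : Finset (Fin c → Sig)) (y : Word k) :
    unifVar (binCount S y) = #S * ((2 : ℝ) ^ k)⁻¹ * (1 - ((2 : ℝ) ^ k)⁻¹) := by
  rw [unifVar_eq_unifExp_sq_sub, unifExp_binCount_sq hc, unifExp_binCount hc]
  ring

end BinCount

lemma one_lt_log_three : 1 < log 3 := by
  linarith [Real.log_three_gt_d9]

lemma mul_mul_log_le_bennett {x : ℝ} (hx : 2 ≤ x) :
    (1 - (log 3)⁻¹) * (x * log x) ≤ bennett x := by
  have hlog3 := one_lt_log_three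
  have hL3 : log 3 ≤ log (x + 1) := log_le_log (by norm_num) (by linarith)
  have hLx : log x ≤ log (x + 1) := log_le_log (by linarith) (by linarith)
  have hκ : 0 ≤ 1 - (log 3)⁻¹ := sub_nonneg.mpr (inv_le_one_of_one_le₀ hlog3.le)
  -- `log (x + 1) ≥ log 3 > 1` is what makes `(x + 1) log (x + 1) - x` comparable to `x log x`.
  have hL : (1 - (log 3)⁻¹) * log (x + 1) ≤ log (x + 1) - 1 := by
    have : 1 ≤ log (x + 1) * (log 3)⁻¹ := by
      rw [← div_eq_mul_inv, one_le_div (by linarith)]; exact hL3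
    linarith
  calc (1 - (log 3)⁻¹) * (x * log x) ≤ x * ((1 - (log 3)⁻¹) * log (x + 1)) := by
        rw [mul_left_comm]; gcongr
    _ ≤ x * (log (x + 1) - 1) := by gcongr
    _ ≤ bennett x := by unfold bennett; nlinarith

lemma mul_mul_log_le_mul_bennett {m N : ℝ} (hm : 2 ≤ m) (hN : 0 ≤ N) :
    (1 - (log 3)⁻¹) / 2 * N * log m ≤ N * m⁻¹ * (1 - m⁻¹) * bennett m := by
  have hm0 : 0 < m := by linarith
  have hq : m⁻¹ ≤ 1 / 2 := by rw [inv_le_comm₀ hm0 (by norm_num)]; linarith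
  have hκ : 0 ≤ 1 - (log 3)⁻¹ := sub_nonneg.mpr (inv_le_one_of_one_le₀ one_lt_log_three.le)
  have hlog : 0 ≤ log m := log_nonneg (by linarith)
  calc (1 - (log 3)⁻¹) / 2 * N * log m
      ≤ N * (1 - m⁻¹) * ((1 - (log 3)⁻¹) * log m) := by
        have : 0 ≤ N * ((1 - (log 3)⁻¹) * log m) := by positivity
        nlinarith
    _ = N * m⁻¹ * (1 - m⁻¹) * ((1 - (log 3)⁻¹) * (m * log m)) := by field_simp
    _ ≤ N * m⁻¹ * (1 - m⁻¹) * bennett m := by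
        gcongr
        · have : 0 ≤ 1 - m⁻¹ := by linarith
          positivity
        · exact mul_mul_log_le_bennett hm

lemma le_mul_log_of_inv_pow_le {m γ E C : ℝ} {n : ℕ} (hm : 2 ≤ m) (hγ : n + 1 ≤ γ)
    (hC : 0 < C) (h : (m ^ n)⁻¹ ≤ 2 * exp (-E / C) + m ^ (-γ)) :
    E ≤ C * ((n + 2) * log m) := by
  have hm0 : 0 < m := by linarith
  have herr : m ^ (-γ) ≤ (m ^ n)⁻¹ / 2 :=
    calc m ^ (-γ) ≤ m ^ (-((n : ℝ) + 1)) :=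
          rpow_le_rpow_of_exponent_le (by linarith) (by linarith)
      _ = (m ^ n * m)⁻¹ := by rw [rpow_neg hm0.le, rpow_add hm0, rpow_natCast, rpow_one]
      _ ≤ (m ^ n * 2)⁻¹ := by gcongr
      _ = (m ^ n)⁻¹ / 2 := by ring
  have hexp : (4 * m ^ n)⁻¹ ≤ exp (-E / C) := by
    rw [mul_inv]; linarith
  have hlog := log_le_log (by positivity) hexp
  rw [log_exp, log_inv, log_mul (by norm_num) (by positivity), log_pow, neg_div,
    neg_le_neg_iff, div_le_iff₀ hC] at hlog
  have hlog4 : log 4 ≤ 2 * log m := by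
    rw [show (4 : ℝ) = 2 ^ 2 by norm_num, log_pow, Nat.cast_ofNat]
    gcongr
  nlinarith

lemma exists_nat_mul_add_one_le_le_two_mul {c : ℕ} (hc : 0 < c) {γ : ℝ}
    (hγ : 2 * c + 2 ≤ γ) : ∃ b : ℕ, 1 ≤ b ∧ (c * b + 1 : ℝ) ≤ γ ∧ γ ≤ 2 * c * b := by
  have hc' : (0 : ℝ) < c := by exact_mod_cast hc
  have hpos : 0 < γ / (2 * c) := by apply div_pos <;> linarith
  refine ⟨⌈γ / (2 * c)⌉₊, Nat.one_le_ceil_iff.mpr hpos, ?_, ?_⟩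
  · have hlt := Nat.ceil_lt_add_one hpos.le
    have : (c : ℝ) * (γ / (2 * c) + 1) = γ / 2 + c := by field_simp
    nlinarith
  · have := Nat.le_ceil (γ / (2 * c))
    rwa [div_le_iff₀ (by positivity), mul_comm] at this

lemma le_of_mul_pow_le_mul {c b : ℕ} (hc : 1 ≤ c) (hb : 1 ≤ b) {γ κ C : ℝ} (hκ : 0 < κ)
    (hγ1 : 1 ≤ γ) (hγ : γ ≤ 2 * c * b) (h : κ * b ^ c ≤ C * (c * b + 2)) :
    κ / (3 * c * (2 * c) ^ (c - 1)) * γ ^ ((c : ℝ) - 2) ≤ C := by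
  have hb' : (1 : ℝ) ≤ b := by exact_mod_cast hb
  have hc' : (1 : ℝ) ≤ c := by exact_mod_cast hc
  have hC : 0 < C := by
    by_contra! hC
    have := mul_nonpos_of_nonpos_of_nonneg hC (by positivity : (0 : ℝ) ≤ c * b + 2)
    have := mul_pos hκ (pow_pos (by linarith : (0 : ℝ) < b) c)
    linarith
  have hκb : κ * b ^ (c - 1) ≤ 3 * c * C := by
    refine le_of_mul_le_mul_right ?_ (by linarith : (0 : ℝ) < b)
    calc κ * b ^ (c - 1) * b = κ * b ^ c := by
          rw [mul_assoc, ← pow_succ, Nat.sub_add_cancel hc]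
      _ ≤ C * (c * b + 2) := h
      _ ≤ 3 * c * C * b := by nlinarith [mul_le_mul hc' hb' zero_le_one (by linarith)]
  have hγpow : γ ^ ((c : ℝ) - 2) ≤ (2 * c) ^ (c - 1) * b ^ (c - 1) :=
    calc γ ^ ((c : ℝ) - 2) ≤ γ ^ ((c : ℝ) - 1) :=
          rpow_le_rpow_of_exponent_le hγ1 (by linarith)
      _ = γ ^ (c - 1) := by rw [← rpow_natCast, Nat.cast_sub hc, Nat.cast_one]
      _ ≤ (2 * c * b) ^ (c - 1) := by gcongr
      _ = (2 * c) ^ (c - 1) * b ^ (c - 1) := mul_pow _ _ _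
  calc κ / (3 * c * (2 * c) ^ (c - 1)) * γ ^ ((c : ℝ) - 2)
      ≤ κ / (3 * c * (2 * c) ^ (c - 1)) * ((2 * c) ^ (c - 1) * b ^ (c - 1)) := by gcongr
    _ = κ * b ^ (c - 1) / (3 * c) := by field_simp
    _ ≤ C := by rw [div_le_iff₀ (by positivity)]; linarith

/-- The hypothesis of the theorem at a single `γ`, with `Cγ = C(γ)`. -/
def TabulationTailBound (Sig : Type) [Fintype Sig] [DecidableEq Sig] (c k : ℕ) (γ Cγ : ℝ) :
    Prop :=
  ∀ (S : Finset (Fin c → Sig)) (w : (Fin c → Sig) → ℝ),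
    (∀ x ∈ S, 0 ≤ w x ∧ w x ≤ 1) →
    ∀ (y : Word k) (X : (Fin c × Sig → Word k) → ℝ),
    (∀ T, X T = ∑ x ∈ S, w x * (if simpleTab T x = y then (1 : ℝ) else 0)) →
    ∀ μ σ2 : ℝ, μ = unifExp X → σ2 = unifVar X → 0 < σ2 →
    ∀ t : ℝ, 0 < t →
      unifPr (fun T => t ≤ |X T - μ|) ≤
        2 * Real.exp (-(σ2 * bennett (t / σ2)) / Cγ) + ((2 : ℝ) ^ k) ^ (-γ)

theorem TabulationTailBound.mul_pow_le {Sig : Type} [Fintype Sig] [DecidableEq Sig] {c k : ℕ}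
    {γ Cγ : ℝ} (h : TabulationTailBound Sig c k γ Cγ) (hc : 0 < c) (hk : 1 ≤ k) (hCγ : 0 < Cγ)
    {B : Finset Sig} (hB : B.Nonempty) (hγ : c * #B + 1 ≤ γ) :
    (1 - (log 3)⁻¹) / 2 * #B ^ c ≤ Cγ * (c * #B + 2) := by
  set m : ℝ := 2 ^ k
  set N : ℝ := #B ^ c
  set X := binCount (Fintype.piFinset fun _ : Fin c => B) (0 : Word k)
  have hm : 2 ≤ m := le_self_pow₀ one_le_two (by omega)
  have hN : 0 < N := by have := hB.card_pos; positivity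
  have hq : m⁻¹ < 1 := inv_lt_one_of_one_lt₀ (by linarith)
  have hS : (#(Fintype.piFinset fun _ : Fin c => B) : ℝ) = N := by simp [N]
  have hμ : unifExp X = N * m⁻¹ := by rw [unifExp_binCount hc, hS]
  have hσ : unifVar X = N * m⁻¹ * (1 - m⁻¹) := by rw [unifVar_binCount hc, hS]
  have hσpos : 0 < unifVar X := by
    rw [hσ]; exact mul_pos (mul_pos hN (inv_pos.mpr (by linarith))) (by linarith)
  have ht : 0 < N * (1 - m⁻¹) := by nlinarith
  have htσ : N * (1 - m⁻¹) / unifVar X = m := by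
    have : m - 1 ≠ 0 := by linarith
    rw [hσ]; field_simp
  have hevent : (m ^ (c * #B))⁻¹ ≤ unifPr fun T => N * (1 - m⁻¹) ≤ |X T - unifExp X| := by
    have hzero := unifPr_forall_mem_eq_zero (G := Word k) ((univ : Finset (Fin c)) ×ˢ B)
    rw [card_word, card_product, card_univ, Fintype.card_fin] at hzero
    push_cast at hzero
    rw [← hzero]
    refine unifPr_mono fun T hT => ?_
    rw [show X T = N from binCount_piFinset_zero B hT, hμ, abs_of_nonneg (by nlinarith)]
    linarith
  have htail := h (Fintype.piFinset fun _ => B) (fun _ => 1) (by simp) 0 X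
    (fun T => by simp [X, binCount]) _ _ rfl rfl hσpos _ ht
  rw [htσ] at htail
  have hexp := le_mul_log_of_inv_pow_le hm (by exact_mod_cast hγ) hCγ (hevent.trans htail)
  have hbennett := mul_mul_log_le_mul_bennett hm hN.le
  rw [← hσ] at hbennett
  push_cast at hexp
  refine le_of_mul_le_mul_right ?_ (log_pos (by linarith : (1 : ℝ) < m))
  linarith

theorem simple_tabulation_lower_bound_general
    (c : ℕ) (hc : 1 ≤ c) (ε ε' : ℝ) (hε'ε : ε' < ε) (hε1 : ε < 1) :
    ∃ α γ₀ s₀ : ℝ, 0 < α ∧ 1 ≤ γ₀ ∧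
      ∀ (Sig : Type) (_ : Fintype Sig) (_ : DecidableEq Sig),
        s₀ ≤ (Fintype.card Sig : ℝ) →
      ∀ k : ℕ, 1 ≤ k → ((2 : ℝ) ^ k) ≤ (Fintype.card Sig : ℝ) ^ (1 - ε) →
      ∀ Cf : ℝ → ℝ, (∀ γ : ℝ, 0 < γ → 0 < Cf γ) →
      (∀ γ : ℝ, 0 < γ → γ ≤ (Fintype.card Sig : ℝ) ^ (ε' / (c : ℝ)) →
        ∀ (S : Finset (Fin c → Sig)) (w : (Fin c → Sig) → ℝ),
          (∀ x ∈ S, 0 ≤ w x ∧ w x ≤ 1) →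
          ∀ (y : Word k) (X : (Fin c × Sig → Word k) → ℝ),
          (∀ T, X T = ∑ x ∈ S, w x * (if simpleTab T x = y then (1 : ℝ) else 0)) →
          ∀ μ σ2 : ℝ, μ = unifExp X → σ2 = unifVar X → 0 < σ2 →
          ∀ t : ℝ, 0 < t →
            unifPr (fun T => t ≤ |X T - μ|) ≤
              2 * Real.exp (-(σ2 * bennett (t / σ2)) / Cf γ) + ((2 : ℝ) ^ k) ^ (-γ)) →
      ∀ γ : ℝ, γ₀ ≤ γ → γ ≤ (Fintype.card Sig : ℝ) ^ (ε' / (c : ℝ)) →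
        α * γ ^ ((c : ℝ) - 2) ≤ Cf γ := by
  have hc' : (1 : ℝ) ≤ c := by exact_mod_cast hc
  have hκ : 0 < (1 - (log 3)⁻¹) / 2 := by
    have := inv_lt_one_of_one_lt₀ one_lt_log_three
    linarith
  refine ⟨(1 - (log 3)⁻¹) / 2 / (3 * c * (2 * c) ^ (c - 1)), 2 * c + 2, 2, by positivity,
    by linarith, ?_⟩
  intro Sig _ _ hSig k hk _ Cf hCf hbound γ hγ₀ hγSig
  obtain ⟨b, hb, hbγ, hγb⟩ := exists_nat_mul_add_one_le_le_two_mul hc hγ₀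
  have hγ : 0 < γ := by linarith
  have hbSig : b ≤ Fintype.card Sig := by
    have hSig_pow : (Fintype.card Sig : ℝ) ^ (ε' / c) ≤ Fintype.card Sig :=
      rpow_le_self_of_one_le (by linarith) ((div_le_one (by linarith)).mpr (by linarith))
    have : (b : ℝ) ≤ Fintype.card Sig := by nlinarith
    exact_mod_cast this
  obtain ⟨B, -, rfl⟩ := Finset.exists_subset_card_eq (s := (univ : Finset Sig)) hbSig
  exact le_of_mul_pow_le_mul hc hb hκ (by linarith) hγb
    (TabulationTailBound.mul_pow_le (hbound γ hγ hγSig) hc hk (hCf γ hγ)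
      (Finset.card_pos.mp hb) hbγ)

/-- Tightness of the simple tabulation concentration bound for few bins:
any function `C(γ)` such that the Chernoff bound with delay `C(γ)` and additive error
`m^{−γ}` holds for simple tabulation must satisfy `C(γ) ≥ α·γ^{c−2}`. -/
theorem simple_tabulation_lower_bound
    (c : ℕ) (hc : 1 ≤ c) (ε ε' : ℝ) (hε'0 : 0 < ε') (hε'ε : ε' < ε) (hε1 : ε < 1) :
    ∃ α γ₀ s₀ : ℝ, 0 < α ∧ 1 ≤ γ₀ ∧
      ∀ (Sig : Type) (_ : Fintype Sig) (_ : DecidableEq Sig),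
        s₀ ≤ (Fintype.card Sig : ℝ) →
      ∀ k : ℕ, 1 ≤ k → ((2 : ℝ) ^ k) ≤ (Fintype.card Sig : ℝ) ^ (1 - ε) →
      ∀ Cf : ℝ → ℝ, (∀ γ : ℝ, 0 < γ → 0 < Cf γ) →
      (∀ γ : ℝ, 0 < γ → γ ≤ (Fintype.card Sig : ℝ) ^ (ε' / (c : ℝ)) →
        ∀ (S : Finset (Fin c → Sig)) (w : (Fin c → Sig) → ℝ),
          (∀ x ∈ S, 0 ≤ w x ∧ w x ≤ 1) →
          ∀ (y : Word k) (X : (Fin c × Sig → Word k) → ℝ),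
          (∀ T, X T = ∑ x ∈ S, w x * (if simpleTab T x = y then (1 : ℝ) else 0)) →
          ∀ μ σ2 : ℝ, μ = unifExp X → σ2 = unifVar X → 0 < σ2 →
          ∀ t : ℝ, 0 < t →
            unifPr (fun T => t ≤ |X T - μ|) ≤
              2 * Real.exp (-(σ2 * bennett (t / σ2)) / Cf γ) + ((2 : ℝ) ^ k) ^ (-γ)) →
      ∀ γ : ℝ, γ₀ ≤ γ → γ ≤ (Fintype.card Sig : ℝ) ^ (ε' / (c : ℝ)) →
        α * γ ^ ((c : ℝ) - 2) ≤ Cf γ :=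
  simple_tabulation_lower_bound_general c hc ε ε' hε'ε hε1
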